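/- If T is a bounded totally paranormal operator whose spectrum lies on the unit circle, then T is unitary. -/

import Mathlib

/-!
Paranormality at `λ = 0`, `‖T x‖² ≤ ‖T² x‖ ‖x‖`, says that `n ↦ ‖Tⁿ x‖` is log-convex, whence
`‖T x‖ⁿ ‖x‖ ≤ ‖Tⁿ x‖ ‖x‖ⁿ`. By Gelfand's formula a paranormal operator of spectral radius at most
one is therefore a contraction. If `σ(T)` lies on the unit circle, then `T` is invertible, `T⁻¹` is
again paranormal and `σ(T⁻¹) = σ(T)⁻¹` also lies on the unit circle. Both `T` and `T⁻¹` are then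
contractions, so `T` is a surjective isometry, i.e. unitary.
-/

open Filter
open scoped NNReal ENNReal

def ContinuousLinearMap.IsParanormal {𝕜 E : Type*} [NontriviallyNormedField 𝕜]
    [NormedAddCommGroup E] [NormedSpace 𝕜 E] (T : E →L[𝕜] E) : Prop :=
  ∀ x : E, ‖T x‖ ^ 2 ≤ ‖T (T x)‖ * ‖x‖

section SpectralRadius

variable {𝕜 A : Type*} [NormedField 𝕜] [Ring A] [Algebra 𝕜 A]

theorem spectralRadius_le_of_forall_norm_le {a : A} {r : ℝ≥0}
    (h : ∀ z ∈ spectrum 𝕜 a, ‖z‖ ≤ r) : spectralRadius 𝕜 a ≤ r :=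
  iSup₂_le fun z hz => ENNReal.coe_le_coe.2 (h z hz)

theorem norm_eq_one_of_mem_spectrum_inv {u : Aˣ} (h : ∀ z ∈ spectrum 𝕜 (u : A), ‖z‖ = 1) :
    ∀ z ∈ spectrum 𝕜 (↑u⁻¹ : A), ‖z‖ = 1 := by
  intro z hz
  rw [← spectrum.map_inv, Set.mem_inv] at hz
  simpa using h _ hz

end SpectralRadius

theorem le_spectralRadius_of_pow_le_nnnorm_pow {A : Type*} [NormedRing A] [NormedAlgebra ℂ A]
    [CompleteSpace A] {a : A} {r : ℝ≥0} (h : ∀ n : ℕ, r ^ n ≤ ‖a ^ n‖₊) :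
    (r : ℝ≥0∞) ≤ spectralRadius ℂ a := by
  refine ge_of_tendsto (spectrum.pow_nnnorm_pow_one_div_tendsto_nhds_spectralRadius a) ?_
  filter_upwards [eventually_ne_atTop 0] with n hn
  calc (r : ℝ≥0∞) = ((r : ℝ≥0∞) ^ n) ^ (1 / n : ℝ) := by
        rw [← ENNReal.rpow_natCast, ← ENNReal.rpow_mul, mul_one_div_cancel (by positivity),
          ENNReal.rpow_one]
    _ ≤ (‖a ^ n‖₊ : ℝ≥0∞) ^ (1 / n : ℝ) := by
        gcongr
        exact_mod_cast h n

namespace ContinuousLinearMap.IsParanormal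

variable {𝕜 E : Type*} [NontriviallyNormedField 𝕜] [NormedAddCommGroup E] [NormedSpace 𝕜 E]
  {T : E →L[𝕜] E}

theorem norm_apply_mul_norm_pow_apply_le (hT : T.IsParanormal) (x : E) (n : ℕ) :
    ‖T x‖ * ‖(T ^ n) x‖ ≤ ‖(T ^ (n + 1)) x‖ * ‖x‖ := by
  induction n with
  | zero => simp [mul_comm]
  | succ n ih =>
    rcases (norm_nonneg ((T ^ (n + 1)) x)).eq_or_lt with h0 | hpos
    · rw [← h0, mul_zero]
      positivity
    have hstep : ‖(T ^ (n + 1)) x‖ ^ 2 ≤ ‖(T ^ (n + 2)) x‖ * ‖(T ^ n) x‖ := by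
      simpa only [pow_succ', mul_apply_eq_comp] using hT ((T ^ n) x)
    refine le_of_mul_le_mul_right ?_ hpos
    calc ‖T x‖ * ‖(T ^ (n + 1)) x‖ * ‖(T ^ (n + 1)) x‖
        = ‖T x‖ * ‖(T ^ (n + 1)) x‖ ^ 2 := by ring
      _ ≤ ‖T x‖ * (‖(T ^ (n + 2)) x‖ * ‖(T ^ n) x‖) := by gcongr
      _ = ‖T x‖ * ‖(T ^ n) x‖ * ‖(T ^ (n + 2)) x‖ := by ring
      _ ≤ ‖(T ^ (n + 1)) x‖ * ‖x‖ * ‖(T ^ (n + 2)) x‖ := by gcongr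
      _ = ‖(T ^ (n + 2)) x‖ * ‖x‖ * ‖(T ^ (n + 1)) x‖ := by ring

theorem norm_apply_pow_mul_le (hT : T.IsParanormal) (x : E) (n : ℕ) :
    ‖T x‖ ^ n * ‖x‖ ≤ ‖(T ^ n) x‖ * ‖x‖ ^ n := by
  induction n with
  | zero => simp
  | succ n ih =>
    calc ‖T x‖ ^ (n + 1) * ‖x‖ = ‖T x‖ * (‖T x‖ ^ n * ‖x‖) := by ring
      _ ≤ ‖T x‖ * (‖(T ^ n) x‖ * ‖x‖ ^ n) := by gcongr
      _ = ‖T x‖ * ‖(T ^ n) x‖ * ‖x‖ ^ n := by ring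
      _ ≤ ‖(T ^ (n + 1)) x‖ * ‖x‖ * ‖x‖ ^ n := by
        gcongr ?_ * _
        exact hT.norm_apply_mul_norm_pow_apply_le x n
      _ = ‖(T ^ (n + 1)) x‖ * ‖x‖ ^ (n + 1) := by ring

theorem inv (u : (E →L[𝕜] E)ˣ) (hu : (u : E →L[𝕜] E).IsParanormal) :
    (↑u⁻¹ : E →L[𝕜] E).IsParanormal := by
  have hu_inv (y : E) : (u : E →L[𝕜] E) ((↑u⁻¹ : E →L[𝕜] E) y) = y := by
    rw [← mul_apply_eq_comp, u.mul_inv, one_apply_eq_self]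
  intro x
  simpa only [hu_inv, mul_comm ‖x‖] using hu ((↑u⁻¹ : E →L[𝕜] E) ((↑u⁻¹ : E →L[𝕜] E) x))

end ContinuousLinearMap.IsParanormal

theorem ContinuousLinearMap.IsParanormal.norm_apply_le {E : Type*} [NormedAddCommGroup E]
    [NormedSpace ℂ E] [CompleteSpace E] {T : E →L[ℂ] E} (hT : T.IsParanormal)
    (hr : spectralRadius ℂ T ≤ 1) (x : E) : ‖T x‖ ≤ ‖x‖ := by
  rcases eq_or_ne x 0 with rfl | hx
  · simp
  have hx_pos : 0 < ‖x‖ := norm_pos_iff.mpr hx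
  have hpow (n : ℕ) : (‖T x‖₊ / ‖x‖₊) ^ n ≤ ‖T ^ n‖₊ := by
    rw [← NNReal.coe_le_coe]
    push_cast
    rw [div_pow, div_le_iff₀ (by positivity)]
    refine le_of_mul_le_mul_right ?_ hx_pos
    calc ‖T x‖ ^ n * ‖x‖ ≤ ‖(T ^ n) x‖ * ‖x‖ ^ n := hT.norm_apply_pow_mul_le x n
      _ ≤ ‖T ^ n‖ * ‖x‖ * ‖x‖ ^ n := by gcongr; exact (T ^ n).le_opNorm x
      _ = ‖T ^ n‖ * ‖x‖ ^ n * ‖x‖ := by ring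
  have hratio := (le_spectralRadius_of_pow_le_nnnorm_pow hpow).trans hr
  rw [ENNReal.coe_le_one_iff, div_le_one (nnnorm_pos.mpr hx)] at hratio
  exact_mod_cast hratio

theorem stmt_15 {H : Type*} [NormedAddCommGroup H] [InnerProductSpace ℂ H]
    [CompleteSpace H] (T : H →L[ℂ] H)
    (hT : ∀ (lam : ℂ) (x : H),
      ‖(T - lam • 1) x‖ ^ 2 ≤ ‖((T - lam • 1) ∘L (T - lam • 1)) x‖ * ‖x‖)
    (hσ : ∀ z ∈ spectrum ℂ T, ‖z‖ = 1) :
    T ∈ unitary (H →L[ℂ] H) := by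
  have hpara : T.IsParanormal := fun x => by simpa using hT 0 x
  have hunit : IsUnit T := by
    rw [← spectrum.zero_notMem_iff ℂ]
    exact fun h0 => by simpa using hσ 0 h0
  obtain ⟨u, rfl⟩ := hunit
  have hradius {a : H →L[ℂ] H} (ha : ∀ z ∈ spectrum ℂ a, ‖z‖ = 1) : spectralRadius ℂ a ≤ 1 :=
    spectralRadius_le_of_forall_norm_le fun z hz => by simp [ha z hz]
  have hcontr := hpara.norm_apply_le (hradius hσ)
  have hcontr_inv :=
    (hpara.inv u).norm_apply_le (hradius (norm_eq_one_of_mem_spectrum_inv hσ))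
  have hisom : ∀ x, ‖(u : H →L[ℂ] H) x‖ = ‖x‖ := fun x =>
    le_antisymm (hcontr x) <| by
      simpa [← mul_apply_eq_comp] using hcontr_inv ((u : H →L[ℂ] H) x)
  refine u.isUnit.mem_unitary_of_star_mul_self ?_
  rw [ContinuousLinearMap.star_eq_adjoint]
  exact (ContinuousLinearMap.norm_map_iff_adjoint_comp_self _).mp hisom
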